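/- (Reduction of ELU-subsumption to TSAT with ∃ only) Let T be a TBox over operators ⊤, ⊓, ⊔ and quantifier ∃, and A, B atomic concepts. Let R be a fresh role and B' a fresh atomic concept, and define T' = T ∪ {⊤ ⊑ ∃R.(A ⊓ B'), ⊤ ⊑ B ⊔ B', B ⊓ B' ⊑ ⊥}. Then T ⊨ A ⊑ B if and only if T' is unsatisfiable. -/

import Mathlib

/-!
If `T ⊨ A ⊑ B`, the added axioms are contradictory: `⊤ ⊑ ∃R.(A ⊓ B')` produces an element of
`A ⊓ B'`, which lies in `B` by the subsumption and outside `B` by `B ⊓ B' ⊑ ⊥`. Conversely, from a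
model of `T` with an element `x ∈ A \ B`, interpret `B'` as the complement of `B` and `R` as the
relation pointing from everything to `x`; since `B'` and `R` do not occur in `T`, this is still a
model of `T`, and it satisfies the three new axioms.
-/

namespace ALC

/-- A Boolean operator: an arity together with a Boolean function of that arity. -/
structure BoolOp where
  arity : ℕ
  fn : (Fin arity → Bool) → Bool

/-- ALC concepts over atomic concepts `A` and roles `R`, with arbitrary Boolean operators. -/
inductive Concept (A R : Type) : Type
  | atom : A → Concept A R
  | op : (o : BoolOp) → (Fin o.arity → Concept A R) → Concept A R
  | ex : R → Concept A R → Concept A R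
  | all : R → Concept A R → Concept A R

def topOp : BoolOp := ⟨0, fun _ => true⟩
def botOp : BoolOp := ⟨0, fun _ => false⟩
def negOp : BoolOp := ⟨1, fun v => !(v 0)⟩
def andOp : BoolOp := ⟨2, fun v => v 0 && v 1⟩
def orOp : BoolOp := ⟨2, fun v => v 0 || v 1⟩
def xorOp : BoolOp := ⟨2, fun v => xor (v 0) (v 1)⟩

namespace Concept
variable {A R : Type}

def top : Concept A R := .op topOp Fin.elim0
def bot : Concept A R := .op botOp Fin.elim0
def neg (C : Concept A R) : Concept A R := .op negOp ![C]
def inf (C D : Concept A R) : Concept A R := .op andOp ![C, D]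
def sup (C D : Concept A R) : Concept A R := .op orOp ![C, D]

/-- The atomic concept `a` occurs in the concept. -/
def atomOcc (a : A) : Concept A R → Prop
  | .atom b => b = a
  | .op _ cs => ∃ i, (cs i).atomOcc a
  | .ex _ c => c.atomOcc a
  | .all _ c => c.atomOcc a

/-- The role `r` occurs in the concept. -/
def roleOcc (r : R) : Concept A R → Prop
  | .atom _ => False
  | .op _ cs => ∃ i, (cs i).roleOcc r
  | .ex s c => s = r ∨ c.roleOcc r
  | .all s c => s = r ∨ c.roleOcc r

/-- All Boolean operators of the concept belong to `B`. -/
def opsIn (B : Set BoolOp) : Concept A R → Prop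
  | .atom _ => True
  | .op o cs => o ∈ B ∧ ∀ i, (cs i).opsIn B
  | .ex _ c => c.opsIn B
  | .all _ c => c.opsIn B

/-- No universal quantifier occurs. -/
def noAll : Concept A R → Prop
  | .atom _ => True
  | .op _ cs => ∀ i, (cs i).noAll
  | .ex _ c => c.noAll
  | .all _ _ => False

/-- No existential quantifier occurs. -/
def noEx : Concept A R → Prop
  | .atom _ => True
  | .op _ cs => ∀ i, (cs i).noEx
  | .ex _ _ => False
  | .all _ c => c.noEx

end Concept

/-- An ALC interpretation. -/
structure Interp (A R Ind : Type) where
  Δ : Type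
  nonempty : Nonempty Δ
  conc : A → Set Δ
  role : R → Δ → Δ → Prop
  ind : Ind → Δ

open Classical in
/-- The extension of a concept in an interpretation. -/
noncomputable def Interp.sem {A R Ind : Type} (I : Interp A R Ind) : Concept A R → Set I.Δ
  | .atom a => I.conc a
  | .op o cs => {x | o.fn (fun i => decide (x ∈ I.sem (cs i))) = true}
  | .ex r c => {x | ∃ y, I.role r x y ∧ y ∈ I.sem c}
  | .all r c => {x | ∀ y, I.role r x y → y ∈ I.sem c}

/-- Satisfaction of a GCI `C ⊑ D`. -/
def Interp.satAx {A R Ind : Type} (I : Interp A R Ind) (ax : Concept A R × Concept A R) : Prop :=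
  I.sem ax.1 ⊆ I.sem ax.2

/-- Satisfaction of a TBox. -/
def Interp.satT {A R Ind : Type} (I : Interp A R Ind) (T : Set (Concept A R × Concept A R)) : Prop :=
  ∀ ax ∈ T, I.satAx ax

/-- ABox assertions. -/
inductive Assertion (A R Ind : Type)
  | conc : Concept A R → Ind → Assertion A R Ind
  | role : R → Ind → Ind → Assertion A R Ind

/-- Satisfaction of an ABox assertion. -/
noncomputable def Interp.satA {A R Ind : Type} (I : Interp A R Ind) : Assertion A R Ind → Prop
  | .conc C a => I.ind a ∈ I.sem C
  | .role r a b => I.role r (I.ind a) (I.ind b)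

/-- Satisfaction of an ABox. -/
def Interp.satAB {A R Ind : Type} (I : Interp A R Ind) (Ab : Set (Assertion A R Ind)) : Prop :=
  ∀ x ∈ Ab, I.satA x

namespace Interp
variable {A R Ind : Type}

abbrev update (I : Interp A R Ind) (c : A → Set I.Δ) (ρ : R → I.Δ → I.Δ → Prop) : Interp A R Ind :=
  { I with conc := c, role := ρ }

theorem sem_update (I : Interp A R Ind) (c : A → Set I.Δ) (ρ : R → I.Δ → I.Δ → Prop)
    (C : Concept A R) (hc : ∀ a, C.atomOcc a → c a = I.conc a)
    (hρ : ∀ s, C.roleOcc s → ρ s = I.role s) :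
    (I.update c ρ).sem C = I.sem C := by
  induction C with
  | atom a => exact hc a rfl
  | op o cs ih =>
    have hcs : ∀ i, (I.update c ρ).sem (cs i) = I.sem (cs i) := fun i =>
      ih i (fun a ha => hc a ⟨i, ha⟩) (fun s hs => hρ s ⟨i, hs⟩)
    simp only [Interp.sem]
    ext x
    simp only [Set.mem_ofPred_eq]
    congr! 2
    funext i
    rw [hcs i]
  | ex s C ih =>
    simp only [Interp.sem, ih hc (fun t ht => hρ t (Or.inr ht)), hρ s (Or.inl rfl)]
  | all s C ih =>
    simp only [Interp.sem, ih hc (fun t ht => hρ t (Or.inr ht)), hρ s (Or.inl rfl)]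

variable (I : Interp A R Ind) (x : I.Δ)

@[simp] theorem mem_sem_atom (a : A) : x ∈ I.sem (.atom a : Concept A R) ↔ x ∈ I.conc a := Iff.rfl

@[simp] theorem mem_sem_top : x ∈ I.sem (Concept.top : Concept A R) := by
  simp [Concept.top, Interp.sem, topOp]

@[simp] theorem notMem_sem_bot : x ∉ I.sem (Concept.bot : Concept A R) := by
  simp [Concept.bot, Interp.sem, botOp]

@[simp] theorem mem_sem_inf (C D : Concept A R) :
    x ∈ I.sem (C.inf D) ↔ x ∈ I.sem C ∧ x ∈ I.sem D := by
  simp only [Concept.inf, Interp.sem, andOp, Set.mem_ofPred_eq, Bool.and_eq_true, decide_eq_true_eq]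
  rfl

@[simp] theorem mem_sem_sup (C D : Concept A R) :
    x ∈ I.sem (C.sup D) ↔ x ∈ I.sem C ∨ x ∈ I.sem D := by
  simp only [Concept.sup, Interp.sem, orOp, Set.mem_ofPred_eq, Bool.or_eq_true, decide_eq_true_eq]
  rfl

@[simp] theorem mem_sem_ex (s : R) (C : Concept A R) :
    x ∈ I.sem (.ex s C) ↔ ∃ y, I.role s x y ∧ y ∈ I.sem C := Iff.rfl

theorem satT_union (T S : Set (Concept A R × Concept A R)) :
    I.satT (T ∪ S) ↔ I.satT T ∧ I.satT S := by
  simp only [satT, Set.mem_union, or_imp, forall_and]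

end Interp

section Reduction
variable {A R Ind : Type}

def reductionAxioms (a b b' : A) (r : R) : Set (Concept A R × Concept A R) :=
  {(Concept.top, Concept.ex r ((Concept.atom a).inf (Concept.atom b'))),
   (Concept.top, (Concept.atom b).sup (Concept.atom b')),
   ((Concept.atom b).inf (Concept.atom b'), Concept.bot)}

theorem Interp.exists_mem_diff_of_satT_reductionAxioms {I : Interp A R Ind} {a b b' : A} {r : R}
    (hI : I.satT (reductionAxioms a b b' r)) : ∃ y, y ∈ I.conc a ∧ y ∉ I.conc b := by
  obtain ⟨x⟩ := I.nonempty
  obtain ⟨y, -, hy⟩ := hI (Concept.top, Concept.ex r ((Concept.atom a).inf (Concept.atom b')))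
    (by simp [reductionAxioms]) (I.mem_sem_top x)
  obtain ⟨hya, hyb'⟩ := (I.mem_sem_inf y _ _).1 hy
  refine ⟨y, hya, fun hyb => I.notMem_sem_bot y ?_⟩
  exact hI ((Concept.atom b).inf (Concept.atom b'), Concept.bot) (by simp [reductionAxioms])
    ((I.mem_sem_inf y _ _).2 ⟨hyb, hyb'⟩)

variable [DecidableEq A] [DecidableEq R]

abbrev Interp.reductionModel (I : Interp A R Ind) (b b' : A) (r : R) (x : I.Δ) : Interp A R Ind :=
  I.update (Function.update I.conc b' (I.conc b)ᶜ) (Function.update I.role r fun _ y => y = x)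

theorem Interp.sem_reductionModel (I : Interp A R Ind) (b b' : A) (r : R) (x : I.Δ)
    {C : Concept A R} (hb' : ¬C.atomOcc b') (hr : ¬C.roleOcc r) :
    (I.reductionModel b b' r x).sem C = I.sem C :=
  I.sem_update _ _ C (fun _ ha => Function.update_of_ne (by rintro rfl; exact hb' ha) _ _)
    (fun _ hs => Function.update_of_ne (by rintro rfl; exact hr hs) _ _)

theorem Interp.satT_reductionModel {I : Interp A R Ind} {T : Set (Concept A R × Concept A R)}
    {b b' : A} {r : R} (x : I.Δ) (hI : I.satT T)
    (hfresh : ∀ ax ∈ T, (¬ax.1.atomOcc b' ∧ ¬ax.2.atomOcc b') ∧ (¬ax.1.roleOcc r ∧ ¬ax.2.roleOcc r)) :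
    (I.reductionModel b b' r x).satT T := by
  intro ax hax
  obtain ⟨⟨hb'₁, hb'₂⟩, hr₁, hr₂⟩ := hfresh ax hax
  simpa only [satAx, I.sem_reductionModel b b' r x hb'₁ hr₁, I.sem_reductionModel b b' r x hb'₂ hr₂]
    using hI ax hax

theorem Interp.satT_reductionModel_reductionAxioms {I : Interp A R Ind} {a b b' : A} {r : R}
    {x : I.Δ} (hxa : x ∈ I.conc a) (hxb : x ∉ I.conc b) (hb'a : b' ≠ a) (hb'b : b' ≠ b) :
    (I.reductionModel b b' r x).satT (reductionAxioms a b b' r) := by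
  intro ax hax
  simp only [reductionAxioms, Set.mem_insert_iff, Set.mem_singleton_iff] at hax
  rcases hax with rfl | rfl | rfl <;> intro z
  · simp [Function.update_of_ne hb'a.symm, hxa, hxb]
  · simp [Function.update_of_ne hb'b.symm, em]
  · simp [Function.update_of_ne hb'b.symm]

end Reduction

theorem stmt15_general {A R Ind : Type} (T : Set (Concept A R × Concept A R)) (a b b' : A) (r rb : R)
    (hfresh : ∀ ax ∈ T,
      (¬ ax.1.atomOcc b' ∧ ¬ ax.2.atomOcc b') ∧
      (¬ ax.1.roleOcc r ∧ ¬ ax.2.roleOcc r) ∧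
      (¬ ax.1.roleOcc rb ∧ ¬ ax.2.roleOcc rb))
    (hb'a : b' ≠ a) (hb'b : b' ≠ b) :
    (∀ I : Interp A R Ind, I.satT T → I.conc a ⊆ I.conc b) ↔
      ¬ ∃ I : Interp A R Ind, I.satT (T ∪
        {(Concept.top, Concept.ex r ((Concept.atom a).inf (Concept.atom b'))),
         (Concept.top, (Concept.atom b).sup (Concept.atom b')),
         ((Concept.atom b).inf (Concept.atom b'), Concept.bot)}) := by
  classical
  change _ ↔ ¬ ∃ I : Interp A R Ind, I.satT (T ∪ reductionAxioms a b b' r)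
  simp only [Interp.satT_union]
  constructor
  · rintro hsub ⟨J, hJT, hJ⟩
    obtain ⟨y, hya, hyb⟩ := J.exists_mem_diff_of_satT_reductionAxioms hJ
    exact hyb (hsub J hJT hya)
  · intro hunsat I hIT x hxa
    by_contra hxb
    exact hunsat ⟨I.reductionModel b b' r x,
      Interp.satT_reductionModel x hIT fun ax hax => ⟨(hfresh ax hax).1, (hfresh ax hax).2.1⟩,
      Interp.satT_reductionModel_reductionAxioms hxa hxb hb'a hb'b⟩

/-- Reduction of ELU-subsumption to TBox satisfiability with ∃ only. -/
theorem stmt15 {A R Ind : Type} (T : Set (Concept A R × Concept A R)) (a b b' : A) (r rb : R)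
    (hT : ∀ ax ∈ T, ax.1.opsIn {topOp, andOp, orOp} ∧ ax.1.noAll ∧
                    ax.2.opsIn {topOp, andOp, orOp} ∧ ax.2.noAll)
    (hfresh : ∀ ax ∈ T,
      (¬ ax.1.atomOcc b' ∧ ¬ ax.2.atomOcc b') ∧
      (¬ ax.1.roleOcc r ∧ ¬ ax.2.roleOcc r) ∧
      (¬ ax.1.roleOcc rb ∧ ¬ ax.2.roleOcc rb))
    (hb'a : b' ≠ a) (hb'b : b' ≠ b) (hr : r ≠ rb) :
    (∀ I : Interp A R Ind, I.satT T → I.conc a ⊆ I.conc b) ↔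
      ¬ ∃ I : Interp A R Ind, I.satT (T ∪
        {(Concept.top, Concept.ex r ((Concept.atom a).inf (Concept.atom b'))),
         (Concept.top, (Concept.atom b).sup (Concept.atom b')),
         ((Concept.atom b).inf (Concept.atom b'), Concept.bot)}) :=
  stmt15_general T a b b' r rb hfresh hb'a hb'b

end ALC
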